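/- Fix r > 0 and 0 < ω₁ < ω_F. Then ∫_{ω₁}^{ω_F} ln(ω) J₀(ωr)² dω = ω_F ln(ω_F)(J₀(ω_F r)² + J₁(ω_F r)²) − ω₁ ln(ω₁)(J₀(ω₁ r)² + J₁(ω₁ r)²) − ∫_{ω₁}^{ω_F} ( J₀(ωr)² − (ln(ω) − 1) J₁(ωr)² ) dω. -/

import Mathlib

/-!
The antiderivative is `G ω = ω log ω (J₀(ωr)² + J₁(ωr)²)`. Differentiating the Bessel series
termwise gives `J₀' = -J₁` and `x J₁'(x) = x J₀(x) - J₁(x)`; with these, `G'` is exactly the sum of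
the two integrands, and the identity is the fundamental theorem of calculus on `[ω₁, ωF]`, where
`log` is continuous.
-/

open Real MeasureTheory intervalIntegral

noncomputable def besselJ (n : ℕ) (x : ℝ) : ℝ :=
  ∑' k : ℕ, (-1 : ℝ) ^ k / (Nat.factorial k * Nat.factorial (k + n)) * (x / 2) ^ (2 * k + n)

noncomputable def besselCoeff (n k : ℕ) : ℝ :=
  (-1 : ℝ) ^ k / (Nat.factorial k * Nat.factorial (k + n))

noncomputable def besselTerm (n k : ℕ) (x : ℝ) : ℝ :=
  besselCoeff n k * (x / 2) ^ (2 * k + n)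

-- When `2 * k + n = 0` the truncated exponent `2 * k + n - 1` is harmless: the factor in front vanishes.
noncomputable def besselTermDeriv (n k : ℕ) (x : ℝ) : ℝ :=
  besselCoeff n k * ((2 * k + n : ℕ) * (x / 2) ^ (2 * k + n - 1) / 2)

theorem besselJ_eq_tsum (n : ℕ) (x : ℝ) : besselJ n x = ∑' k, besselTerm n k x := rfl

theorem besselCoeff_eq_mul_besselCoeff_succ (n k : ℕ) :
    besselCoeff n k = (k + n + 1) * besselCoeff (n + 1) k := by
  rw [besselCoeff, besselCoeff, ← add_assoc, Nat.factorial_succ (k + n)]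
  push_cast
  field_simp

theorem besselCoeff_succ_eq (n k : ℕ) :
    besselCoeff (n + 1) k = -(k + 1) * besselCoeff n (k + 1) := by
  rw [besselCoeff, besselCoeff, ← add_assoc, add_right_comm k 1 n, Nat.factorial_succ (k + n),
    Nat.factorial_succ k, pow_succ]
  push_cast
  field_simp

theorem abs_besselCoeff (n k : ℕ) :
    |besselCoeff n k| = 1 / (Nat.factorial k * Nat.factorial (k + n)) := by
  rw [besselCoeff, abs_div, abs_pow, abs_neg, abs_one, one_pow, abs_of_pos (by positivity)]

theorem abs_besselCoeff_le (n k : ℕ) : |besselCoeff n k| ≤ 1 / Nat.factorial k := by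
  rw [abs_besselCoeff]
  calc 1 / (Nat.factorial k * Nat.factorial (k + n) : ℝ) ≤ 1 / (Nat.factorial k * 1) := by
        gcongr
        exact_mod_cast Nat.one_le_iff_ne_zero.mpr (Nat.factorial_ne_zero _)
    _ = 1 / Nat.factorial k := by rw [mul_one]

theorem abs_besselCoeff_mul_le (n k : ℕ) :
    |besselCoeff n k| * (2 * k + n : ℕ) ≤ 2 / Nat.factorial k := by
  have hle : (2 * k + n : ℕ) ≤ 2 * Nat.factorial (k + n) :=
    (by omega : 2 * k + n ≤ 2 * (k + n)).trans (Nat.mul_le_mul_left 2 (Nat.self_le_factorial _))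
  rw [abs_besselCoeff]
  calc 1 / (Nat.factorial k * Nat.factorial (k + n) : ℝ) * (2 * k + n : ℕ)
      ≤ 1 / (Nat.factorial k * Nat.factorial (k + n)) * (2 * Nat.factorial (k + n)) := by
        gcongr
        exact_mod_cast hle
    _ = 2 / Nat.factorial k := by field_simp

theorem hasDerivAt_besselTerm (n k : ℕ) (x : ℝ) :
    HasDerivAt (besselTerm n k) (besselTermDeriv n k x) x := by
  have h := ((hasDerivAt_id x).div_const 2).fun_pow (2 * k + n) |>.const_mul (besselCoeff n k)
  refine h.congr_deriv ?_
  rw [besselTermDeriv, id]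
  ring

theorem summable_pow_two_mul_add_div_factorial (M : ℝ) (n : ℕ) :
    Summable fun k : ℕ => M ^ (2 * k + n) / Nat.factorial k := by
  refine ((Real.summable_pow_div_factorial (M ^ 2)).mul_left (M ^ n)).congr fun k => ?_
  rw [pow_add, pow_mul]
  ring

theorem abs_besselTerm_le (n k : ℕ) {M y : ℝ} (hy : |y| ≤ M) :
    |besselTerm n k y| ≤ M ^ (2 * k + n) / Nat.factorial k := by
  have hy2 : |y / 2| ≤ M := by rw [abs_div, abs_two]; linarith [abs_nonneg y]
  rw [besselTerm, abs_mul, abs_pow, div_eq_mul_one_div _ (Nat.factorial k : ℝ), mul_comm (M ^ _)]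
  gcongr
  exact abs_besselCoeff_le n k

theorem abs_besselTermDeriv_le (n k : ℕ) {M y : ℝ} (hM : 1 ≤ M) (hy : |y| ≤ M) :
    |besselTermDeriv n k y| ≤ M ^ (2 * k + n) / Nat.factorial k := by
  have hy2 : |y / 2| ≤ M := by rw [abs_div, abs_two]; linarith [abs_nonneg y]
  have hpow : |y / 2| ^ (2 * k + n - 1) ≤ M ^ (2 * k + n) :=
    (pow_le_pow_left₀ (abs_nonneg _) hy2 _).trans (pow_le_pow_right₀ hM (Nat.sub_le _ _))
  calc |besselTermDeriv n k y|
      = |besselCoeff n k| * (2 * k + n : ℕ) * |y / 2| ^ (2 * k + n - 1) / 2 := by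
        rw [besselTermDeriv, abs_mul, abs_div, abs_mul, abs_pow, Nat.abs_cast, abs_two]
        ring
    _ ≤ 2 / Nat.factorial k * M ^ (2 * k + n) / 2 := by
        gcongr
        exact abs_besselCoeff_mul_le n k
    _ = M ^ (2 * k + n) / Nat.factorial k := by ring

theorem summable_besselTerm (n : ℕ) (x : ℝ) : Summable fun k => besselTerm n k x :=
  .of_norm_bounded (summable_pow_two_mul_add_div_factorial |x| n)
    fun k => abs_besselTerm_le n k le_rfl

theorem summable_besselTermDeriv (n : ℕ) (x : ℝ) : Summable fun k => besselTermDeriv n k x :=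
  .of_norm_bounded (summable_pow_two_mul_add_div_factorial (|x| + 1) n)
    fun k => abs_besselTermDeriv_le n k (by linarith [abs_nonneg x]) (by linarith)

theorem hasDerivAt_besselJ (n : ℕ) (x : ℝ) :
    HasDerivAt (besselJ n) (∑' k, besselTermDeriv n k x) x := by
  have hM : 1 ≤ |x| + 1 := by linarith [abs_nonneg x]
  have hx : x ∈ Metric.ball (0 : ℝ) (|x| + 1) := by simp
  exact hasDerivAt_tsum_of_isPreconnected (summable_pow_two_mul_add_div_factorial (|x| + 1) n)
    Metric.isOpen_ball (convex_ball 0 _).isPreconnected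
    (fun k y _ => hasDerivAt_besselTerm n k y)
    (fun k y hy => abs_besselTermDeriv_le n k hM (by simpa using (Metric.mem_ball.mp hy).le))
    hx (summable_besselTerm n x) hx

theorem differentiable_besselJ (n : ℕ) : Differentiable ℝ (besselJ n) :=
  fun x => (hasDerivAt_besselJ n x).differentiableAt

theorem deriv_besselJ_zero (x : ℝ) : deriv (besselJ 0) x = -besselJ 1 x := by
  have hterm (k : ℕ) : besselTermDeriv 0 (k + 1) x = -besselTerm 1 k x := by
    rw [besselTermDeriv, besselTerm, besselCoeff_succ_eq,
      show 2 * (k + 1) + 0 - 1 = 2 * k + 1 by omega]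
    push_cast
    ring
  rw [(hasDerivAt_besselJ 0 x).deriv, (summable_besselTermDeriv 0 x).tsum_eq_zero_add,
    besselJ_eq_tsum, ← tsum_neg, show besselTermDeriv 0 0 x = 0 by simp [besselTermDeriv], zero_add]
  exact tsum_congr hterm

theorem mul_deriv_besselJ_succ (n : ℕ) (x : ℝ) :
    x * deriv (besselJ (n + 1)) x = x * besselJ n x - (n + 1) * besselJ (n + 1) x := by
  have hterm (k : ℕ) : x * besselTermDeriv (n + 1) k x
      = x * besselTerm n k x - (n + 1) * besselTerm (n + 1) k x := by
    rw [besselTermDeriv, besselTerm, besselTerm, besselCoeff_eq_mul_besselCoeff_succ n k,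
      show 2 * k + (n + 1) - 1 = 2 * k + n by omega, ← add_assoc, pow_succ]
    push_cast
    ring
  rw [(hasDerivAt_besselJ (n + 1) x).deriv, besselJ_eq_tsum, besselJ_eq_tsum, ← tsum_mul_left,
    ← tsum_mul_left, ← tsum_mul_left, ← ((summable_besselTerm n x).mul_left x).tsum_sub
      ((summable_besselTerm (n + 1) x).mul_left _)]
  exact tsum_congr hterm

theorem hasDerivAt_mul_log_mul_besselJ_sq_add_sq (r : ℝ) {ω : ℝ} (hω : ω ≠ 0) :
    HasDerivAt (fun ω => ω * log ω * (besselJ 0 (ω * r) ^ 2 + besselJ 1 (ω * r) ^ 2))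
      (log ω * besselJ 0 (ω * r) ^ 2 +
        (besselJ 0 (ω * r) ^ 2 - (log ω - 1) * besselJ 1 (ω * r) ^ 2)) ω := by
  have hJ (n : ℕ) : HasDerivAt (fun ω => besselJ n (ω * r)) (deriv (besselJ n) (ω * r) * r) ω :=
    (differentiable_besselJ n _).hasDerivAt.comp ω (hasDerivAt_mul_const r)
  have h := ((hasDerivAt_id ω).mul (hasDerivAt_log hω)).mul (((hJ 0).pow 2).add ((hJ 1).pow 2))
  refine h.congr_deriv ?_
  have hrec : ω * r * deriv (besselJ 1) (ω * r) = ω * r * besselJ 0 (ω * r) - besselJ 1 (ω * r) := by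
    simpa using mul_deriv_besselJ_succ 0 (ω * r)
  simp only [deriv_besselJ_zero, Pi.add_apply, Pi.mul_apply, Pi.pow_apply, id]
  field_simp
  linear_combination (2 * log ω * besselJ 1 (ω * r)) * hrec

theorem stmt6_general (r ω₁ ωF : ℝ) (h1 : 0 < ω₁) (h1F : ω₁ < ωF) :
    ∫ ω in ω₁..ωF, Real.log ω * (besselJ 0 (ω * r)) ^ 2 =
      ωF * Real.log ωF * ((besselJ 0 (ωF * r)) ^ 2 + (besselJ 1 (ωF * r)) ^ 2)
      - ω₁ * Real.log ω₁ * ((besselJ 0 (ω₁ * r)) ^ 2 + (besselJ 1 (ω₁ * r)) ^ 2)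
      - ∫ ω in ω₁..ωF,
          ((besselJ 0 (ω * r)) ^ 2 - (Real.log ω - 1) * (besselJ 1 (ω * r)) ^ 2) := by
  have hne : ∀ ω ∈ Set.uIcc ω₁ ωF, ω ≠ 0 := fun ω hω =>
    (lt_of_lt_of_le (lt_min h1 (h1.trans h1F)) hω.1).ne'
  have hlog : ContinuousOn log (Set.uIcc ω₁ ωF) := continuousOn_log.mono hne
  have hJ (n : ℕ) : ContinuousOn (fun ω => besselJ n (ω * r)) (Set.uIcc ω₁ ωF) :=
    ((differentiable_besselJ n).continuous.comp (continuous_mul_const r)).continuousOn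
  have hint₁ : IntervalIntegrable (fun ω => log ω * besselJ 0 (ω * r) ^ 2) volume ω₁ ωF :=
    (hlog.mul ((hJ 0).pow 2)).intervalIntegrable
  have hint₂ : IntervalIntegrable
      (fun ω => besselJ 0 (ω * r) ^ 2 - (log ω - 1) * besselJ 1 (ω * r) ^ 2) volume ω₁ ωF :=
    (((hJ 0).pow 2).sub ((hlog.sub continuousOn_const).mul ((hJ 1).pow 2))).intervalIntegrable
  have hftc := integral_eq_sub_of_hasDerivAt
    (fun ω hω => hasDerivAt_mul_log_mul_besselJ_sq_add_sq r (hne ω hω)) (hint₁.add hint₂)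
  rw [integral_add hint₁ hint₂] at hftc
  linarith

theorem stmt6 (r ω₁ ωF : ℝ) (hr : 0 < r) (h1 : 0 < ω₁) (h1F : ω₁ < ωF) :
    ∫ ω in ω₁..ωF, Real.log ω * (besselJ 0 (ω * r)) ^ 2 =
      ωF * Real.log ωF * ((besselJ 0 (ωF * r)) ^ 2 + (besselJ 1 (ωF * r)) ^ 2)
      - ω₁ * Real.log ω₁ * ((besselJ 0 (ω₁ * r)) ^ 2 + (besselJ 1 (ω₁ * r)) ^ 2)
      - ∫ ω in ω₁..ωF,
          ((besselJ 0 (ω * r)) ^ 2 - (Real.log ω - 1) * (besselJ 1 (ω * r)) ^ 2) :=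
  stmt6_general r ω₁ ωF h1 h1F
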